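/- Let κ be a regular uncountable cardinal, let D ⊆ Sacks(κ) be a nonempty directed set with |D| < κ, and let s ∈ ⋂D. Then there is a function f : κ → 2 extending s (i.e. s = f↾dom(s)) such that f is a cofinal branch through every member of D: f↾α ∈ T for every α < κ and every T ∈ D. -/

import Mathlib

/-!
The branch is built by transfinite recursion inside `⋂ D`, starting along `s`. At limit stages
it stays in every `T ∈ D` by the limit closure (1) of `T`. At successor stages directedness
supplies a common one-step extension: for `T ≤ T₀, T₁` in `D`, a splitting node of `T` above `t`
puts `t⌢0` or `t⌢1` into `T`, so it cannot be that `t⌢0 ∉ T₀` and `t⌢1 ∉ T₁`.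
-/

universe u

namespace Stmt9

/-- A node of the tree `2^{<κ}`: a function `s : β → 2` for some ordinal `β`. -/
abbrev BNode : Type (u + 1) :=
  (β : Ordinal.{u}) × ({γ : Ordinal.{u} // γ < β} → Bool)

/-- The restriction `s↾α` of a node `s` to some `α ≤ dom s`. -/
def nrestrict (s : BNode.{u}) (α : Ordinal.{u}) (h : α ≤ s.1) : BNode.{u} :=
  ⟨α, fun γ => s.2 ⟨γ.1, lt_of_lt_of_le γ.2 h⟩⟩

/-- The one-step extension `s⌢b` of a node `s`. -/
noncomputable def extOne (s : BNode.{u}) (b : Bool) : BNode.{u} :=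
  ⟨s.1 + 1, fun γ => if h : γ.1 < s.1 then s.2 ⟨γ.1, h⟩ else b⟩

/-- `s` splits in `T`: both one-step extensions of `s` lie in `T`. -/
def Splits (T : Set BNode.{u}) (s : BNode.{u}) : Prop :=
  extOne s false ∈ T ∧ extOne s true ∈ T

/-- `T` is a subtree of `2^{<κ}`: nonempty, consisting of nodes of length `< κ`,
and closed under restrictions. -/
def IsSubtree (κ : Cardinal.{u}) (T : Set BNode.{u}) : Prop :=
  T.Nonempty ∧ (∀ s ∈ T, s.1 < κ.ord) ∧
  ∀ s ∈ T, ∀ α : Ordinal.{u}, ∀ h : α ≤ s.1, nrestrict s α h ∈ T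

/-- `T` is a condition of Kanamori's forcing `Sacks(κ)`. -/
def IsSacks (κ : Cardinal.{u}) (T : Set BNode.{u}) : Prop :=
  IsSubtree κ T ∧
  (∀ s : BNode.{u}, s.1 < κ.ord → Order.IsSuccLimit s.1 →
    (∀ β : Ordinal.{u}, ∀ h : β < s.1, nrestrict s β h.le ∈ T) → s ∈ T) ∧
  (∀ s ∈ T, ∃ t ∈ T, ∃ h : s.1 ≤ t.1, nrestrict t s.1 h = s ∧ Splits T t) ∧
  (∀ s ∈ T, Order.IsSuccLimit s.1 →
    (∀ β : Ordinal.{u}, β < s.1 → ∃ γ : Ordinal.{u}, β ≤ γ ∧ ∃ h : γ < s.1,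
      Splits T (nrestrict s γ h.le)) →
    Splits T s)

/-- The restriction `f↾α` of a branch `f : κ → 2` to an ordinal `α ≤ κ`. -/
def brestrict (κ : Cardinal.{u}) (f : {γ : Ordinal.{u} // γ < κ.ord} → Bool)
    (α : Ordinal.{u}) (h : α ≤ κ.ord) : BNode.{u} :=
  ⟨α, fun γ => f ⟨γ.1, lt_of_lt_of_le γ.2 h⟩⟩


theorem brestrict_eq_nrestrict (κ : Cardinal.{u}) (f : {γ : Ordinal.{u} // γ < κ.ord} → Bool)
    (α : Ordinal.{u}) (h : α ≤ κ.ord) : brestrict κ f α h = nrestrict ⟨κ.ord, f⟩ α h :=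
  rfl

theorem nrestrict_add_one (s : BNode.{u}) {β : Ordinal.{u}} (hβ : β < s.1) :
    nrestrict s (β + 1) (Order.add_one_le_of_lt hβ) =
      extOne (nrestrict s β hβ.le) (s.2 ⟨β, hβ⟩) := by
  refine congrArg (Sigma.mk (β + 1)) (funext fun γ => ?_)
  show s.2 _ = if h : γ.1 < β then s.2 ⟨γ.1, _⟩ else s.2 ⟨β, hβ⟩
  by_cases hγ : γ.1 < β
  · rw [dif_pos hγ]
  · rw [dif_neg hγ]
    exact congrArg s.2 (Subtype.ext (le_antisymm (Order.lt_add_one_iff.mp γ.2) (not_lt.mp hγ)))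

theorem nrestrict_extOne (s : BNode.{u}) (b : Bool) {α : Ordinal.{u}} (h : α ≤ s.1) :
    nrestrict (extOne s b) α (h.trans le_self_add) = nrestrict s α h := by
  refine congrArg (Sigma.mk α) (funext fun γ => ?_)
  show (if h : γ.1 < s.1 then s.2 ⟨γ.1, h⟩ else b) = _
  rw [dif_pos (γ.2.trans_le h)]

/-- If `u ⊇ t` splits in `T`, then `t⌢b` is a restriction of `u⌢0 ∈ T` for `b = (u⌢0)(dom t)`. -/
theorem IsSacks.exists_extOne_mem {κ : Cardinal.{u}} {T : Set BNode.{u}} (hT : IsSacks κ T)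
    {t : BNode.{u}} (ht : t ∈ T) : ∃ b, extOne t b ∈ T := by
  obtain ⟨u, -, hle, hres, hsplit, -⟩ := hT.2.2.1 t ht
  have hlt : t.1 < (extOne u false).1 := hle.trans_lt (Order.lt_add_one_iff.mpr le_rfl)
  refine ⟨(extOne u false).2 ⟨t.1, hlt⟩, ?_⟩
  have := hT.1.2.2 _ hsplit (t.1 + 1) (Order.add_one_le_of_lt hlt)
  rwa [nrestrict_add_one _ hlt, nrestrict_extOne u false hle, hres] at this

theorem exists_extOne_mem_sInter {κ : Cardinal.{u}} {D : Set (Set BNode.{u})}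
    (hD : ∀ T ∈ D, IsSacks κ T) (hdir : ∀ T₁ ∈ D, ∀ T₂ ∈ D, ∃ T ∈ D, T ⊆ T₁ ∧ T ⊆ T₂)
    {t : BNode.{u}} (ht : t ∈ ⋂₀ D) : ∃ b, extOne t b ∈ ⋂₀ D := by
  by_contra! hnot
  simp only [Set.mem_sInter, not_forall, exists_prop] at hnot
  obtain ⟨T₀, hT₀, h₀⟩ := hnot false
  obtain ⟨T₁, hT₁, h₁⟩ := hnot true
  obtain ⟨T, hT, hsub₀, hsub₁⟩ := hdir T₀ hT₀ T₁ hT₁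
  obtain ⟨b, hb⟩ := (hD T hT).exists_extOne_mem (ht T hT)
  cases b
  exacts [h₀ (hsub₀ hb), h₁ (hsub₁ hb)]

section Follow

variable (s : BNode.{u}) (next : BNode.{u} → Bool)

noncomputable def follow (γ : Ordinal.{u}) : Bool :=
  if h : γ < s.1 then s.2 ⟨γ, h⟩ else next ⟨γ, fun δ => follow δ.1⟩
termination_by γ
decreasing_by exact δ.2

theorem follow_of_lt {γ : Ordinal.{u}} (h : γ < s.1) : follow s next γ = s.2 ⟨γ, h⟩ := by
  rw [follow, dif_pos h]

theorem follow_of_le {γ : Ordinal.{u}} (h : s.1 ≤ γ) :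
    follow s next γ = next ⟨γ, fun δ => follow s next δ.1⟩ := by
  rw [follow, dif_neg h.not_gt]

end Follow

theorem exists_branch_extending {κ : Cardinal.{u}} {S : Set BNode.{u}}
    (hres : ∀ t ∈ S, ∀ α (h : α ≤ t.1), nrestrict t α h ∈ S)
    (hlim : ∀ t : BNode.{u}, t.1 < κ.ord → Order.IsSuccLimit t.1 →
      (∀ β (h : β < t.1), nrestrict t β h.le ∈ S) → t ∈ S)
    (hext : ∀ t ∈ S, ∃ b, extOne t b ∈ S) {s : BNode.{u}} (hs : s ∈ S) :
    ∃ f : {γ : Ordinal.{u} // γ < κ.ord} → Bool,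
      (∀ γ (h1 : γ < s.1) (h2 : γ < κ.ord), f ⟨γ, h2⟩ = s.2 ⟨γ, h1⟩) ∧
      ∀ α (h : α < κ.ord), brestrict κ f α h.le ∈ S := by
  choose! next hnext using hext
  set f : {γ : Ordinal.{u} // γ < κ.ord} → Bool := fun γ => follow s next γ.1
  refine ⟨f, fun γ h1 _ => follow_of_lt s next h1, fun α => ?_⟩
  induction α using WellFoundedLT.induction with | _ α IH => ?_
  rcases le_or_gt α s.1 with hle | hlt
  · intro hα
    convert hres s hs α hle using 1
    exact congrArg (Sigma.mk α) (funext fun γ => follow_of_lt s next (γ.2.trans_le hle))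
  rcases Ordinal.zero_or_succ_or_isSuccLimit α with rfl | ⟨β, rfl⟩ | hα_lim
  · exact absurd hlt not_lt_bot
  · rw [Order.succ_eq_add_one] at hlt IH ⊢
    intro hα
    have hβ : β < κ.ord := (Order.lt_add_one_iff.mpr le_rfl).trans hα
    rw [brestrict_eq_nrestrict, nrestrict_add_one (⟨κ.ord, f⟩ : BNode.{u}) hβ]
    show extOne (brestrict κ f β hβ.le) (follow s next β) ∈ S
    rw [follow_of_le s next (Order.lt_add_one_iff.mp hlt)]
    exact hnext _ (IH β (Order.lt_add_one_iff.mpr le_rfl) hβ)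
  · exact fun hα => hlim _ hα hα_lim fun β hβ => IH β hβ (hβ.trans hα)

theorem branch_through_directed_family_general (κ : Cardinal.{u})
    (D : Set (Set BNode.{u}))
    (hD : ∀ T ∈ D, IsSacks κ T)
    (hdir : ∀ T₁ ∈ D, ∀ T₂ ∈ D, ∃ T ∈ D, T ⊆ T₁ ∧ T ⊆ T₂)
    (s : BNode.{u}) (hs : s ∈ ⋂₀ D) :
    ∃ f : {γ : Ordinal.{u} // γ < κ.ord} → Bool,
      (∀ γ : Ordinal.{u}, ∀ h1 : γ < s.1, ∀ h2 : γ < κ.ord, f ⟨γ, h2⟩ = s.2 ⟨γ, h1⟩) ∧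
      (∀ α : Ordinal.{u}, ∀ h : α < κ.ord, ∀ T ∈ D, brestrict κ f α h.le ∈ T) := by
  obtain ⟨f, hf_ext, hf_mem⟩ := exists_branch_extending (κ := κ) (S := ⋂₀ D)
    (fun t ht α h T hT => (hD T hT).1.2.2 t (ht T hT) α h)
    (fun t htκ ht_lim ht T hT => (hD T hT).2.1 t htκ ht_lim fun β h => ht β h T hT)
    (fun t ht => exists_extOne_mem_sInter hD hdir ht) hs
  exact ⟨f, hf_ext, fun α h => Set.mem_sInter.mp (hf_mem α h)⟩

/-- Let `κ` be regular uncountable, `D ⊆ Sacks(κ)` nonempty and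
directed with `|D| < κ`, and `s ∈ ⋂D`.  Then there is `f : κ → 2` extending `s`
(i.e. agreeing with `s` on `dom s`) which is a cofinal branch through every member of
`D`: `f↾α ∈ T` for every `α < κ` and every `T ∈ D`. -/
theorem branch_through_directed_family (κ : Cardinal.{u}) (hreg : κ.IsRegular)
    (hunc : Cardinal.aleph0 < κ)
    (D : Set (Set BNode.{u})) (hne : D.Nonempty)
    (hD : ∀ T ∈ D, IsSacks κ T)
    (hdir : ∀ T₁ ∈ D, ∀ T₂ ∈ D, ∃ T ∈ D, T ⊆ T₁ ∧ T ⊆ T₂)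
    (hcard : Cardinal.mk D < Cardinal.lift.{u + 1} κ)
    (s : BNode.{u}) (hs : s ∈ ⋂₀ D) :
    ∃ f : {γ : Ordinal.{u} // γ < κ.ord} → Bool,
      (∀ γ : Ordinal.{u}, ∀ h1 : γ < s.1, ∀ h2 : γ < κ.ord, f ⟨γ, h2⟩ = s.2 ⟨γ, h1⟩) ∧
      (∀ α : Ordinal.{u}, ∀ h : α < κ.ord, ∀ T ∈ D, brestrict κ f α h.le ∈ T) :=
  branch_through_directed_family_general κ D hD hdir s hs

end Stmt9
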